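/- arXiv:1801.09197 — 6 statements merged into one kernel-verified Lean document; each statement's English description precedes it below -/
import Mathlib

section
/- (Cogenerator faithfulness.) Let R be a commutative ring and F an R-module which is a cogenerator: for every R-module N and every nonzero n ∈ N there exists an R-linear map φ : N →ₗ[R] F with φ n ≠ 0. Let M be a p×q matrix over R such that for every f : Fin q → F and every i ∈ Fin p, ∑_j M i j • f j = 0. Then M = 0. -/
universe u v

def Module.IsCogenerator (R : Type u) (F : Type v) [Ring R] [AddCommGroup F] [Module R F] :
    Prop :=
  ∀ (N : Type u) [AddCommGroup N] [Module R N] (n : N), n ≠ 0 → ∃ φ : N →ₗ[R] F, φ n ≠ 0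

theorem Module.IsCogenerator.faithfulSMul {R : Type u} {F : Type v} [Ring R] [AddCommGroup F]
    [Module R F] (hF : Module.IsCogenerator R F) : FaithfulSMul R F where
  eq_of_smul_eq_smul {r s} h := by
    by_contra hrs
    obtain ⟨φ, hφ⟩ := hF R (r - s) (sub_ne_zero.2 hrs)
    apply hφ
    rw [← mul_one (r - s), ← smul_eq_mul, map_smul, sub_smul, h, sub_self]

theorem Matrix.smul_eq_zero_of_forall_sum_smul_eq_zero {m n R F : Type*} [Fintype n]
    [DecidableEq n] [Semiring R] [AddCommMonoid F] [Module R F] {M : Matrix m n R}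
    (hM : ∀ (f : n → F) (i : m), ∑ j, M i j • f j = 0) (i : m) (j : n) (x : F) :
    M i j • x = 0 := by
  simpa [Pi.single_apply] using hM (Pi.single j x) i

/-- Cogenerator faithfulness: if `F` is a cogenerator among `R`-modules and the matrix `M`
annihilates every vector `f : Fin q → F`, then `M = 0`. -/
theorem matrix_eq_zero_of_cogenerator
    {R : Type u} [CommRing R] {F : Type v} [AddCommGroup F] [Module R F]
    (hcog : ∀ (N : Type u) [AddCommGroup N] [Module R N] (n : N), n ≠ 0 →
      ∃ φ : N →ₗ[R] F, φ n ≠ 0)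
    {p q : ℕ} (M : Matrix (Fin p) (Fin q) R)
    (hM : ∀ (f : Fin q → F) (i : Fin p), ∑ j, M i j • f j = 0) :
    M = 0 := by
  have := Module.IsCogenerator.faithfulSMul hcog
  ext i j
  exact eq_of_smul_eq_smul fun x ↦ by
    rw [Matrix.smul_eq_zero_of_forall_sum_smul_eq_zero hM i j x, Matrix.zero_apply, zero_smul]
end

section
/- (Cogenerator duality for rows.) Let R be a commutative ring and F an R-module that is both injective (Module.Injective R F) and a cogenerator (for every R-module N and every nonzero n ∈ N there exists an R-linear map φ : N →ₗ[R] F with φ n ≠ 0). Let A be an ℓ'×ℓ matrix over R and r ∈ R^ℓ a row vector. If every f ∈ sol_F(A) satisfies ∑_j r j • f j = 0, then r lies in the R-submodule of R^ℓ generated by the rows of A. -/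
/-!
The rows of `A` span a submodule `M ⊆ R^ℓ`, and the solutions of `A` in `F` are exactly the
coordinate vectors `j ↦ ψ (eⱼ)` of the linear maps `ψ : R^ℓ → F` vanishing on `M`. If `r ∉ M`,
its class in `R^ℓ ⧸ M` is nonzero, so the cogenerator property yields such a `ψ` with
`ψ r ≠ 0`, i.e. a solution violating the equation `r`.
-/

universe u v

theorem Submodule.mem_of_forall_linearMap_eq_zero_of_cogenerator
    {R : Type u} [CommRing R] {F : Type v} [AddCommGroup F] [Module R F]
    (hcog : ∀ (N : Type u) [AddCommGroup N] [Module R N] (n : N), n ≠ 0 →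
      ∃ φ : N →ₗ[R] F, φ n ≠ 0)
    {V : Type u} [AddCommGroup V] [Module R V] (M : Submodule R V) {v : V}
    (hv : ∀ ψ : V →ₗ[R] F, (∀ m ∈ M, ψ m = 0) → ψ v = 0) :
    v ∈ M := by
  by_contra hvM
  have hne : M.mkQ v ≠ 0 := by simpa [Submodule.mkQ_apply, Submodule.Quotient.mk_eq_zero]
  obtain ⟨φ, hφ⟩ := hcog (V ⧸ M) (M.mkQ v) hne
  refine hφ (hv (φ ∘ₗ M.mkQ) fun m hm => ?_)
  simp [(Submodule.Quotient.mk_eq_zero M).mpr hm]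

theorem row_mem_span_of_annihilates_solutions_general
    {R : Type u} [CommRing R] {F : Type v} [AddCommGroup F] [Module R F]
    (hcog : ∀ (N : Type u) [AddCommGroup N] [Module R N] (n : N), n ≠ 0 →
      ∃ φ : N →ₗ[R] F, φ n ≠ 0)
    {ℓ' ℓ : ℕ} (A : Matrix (Fin ℓ') (Fin ℓ) R) (r : Fin ℓ → R)
    (hr : ∀ f : Fin ℓ → F, (∀ i, ∑ j, A i j • f j = 0) → ∑ j, r j • f j = 0) :
    r ∈ Submodule.span R (Set.range fun i => fun j => A i j) := by
  refine Submodule.mem_of_forall_linearMap_eq_zero_of_cogenerator hcog _ fun ψ hψ => ?_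
  rw [LinearMap.pi_apply_eq_sum_univ ψ r]
  refine hr _ fun i => ?_
  rw [← LinearMap.pi_apply_eq_sum_univ ψ]
  exact hψ _ (Submodule.subset_span ⟨i, rfl⟩)

/-- Cogenerator duality for rows: over an injective cogenerator module `F`, every row
equation `r` satisfied by all solutions of `A` is an `R`-linear consequence of the rows
of `A`. -/
theorem row_mem_span_of_annihilates_solutions
    {R : Type u} [CommRing R] {F : Type v} [AddCommGroup F] [Module R F]
    (hinj : Module.Injective R F)
    (hcog : ∀ (N : Type u) [AddCommGroup N] [Module R N] (n : N), n ≠ 0 →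
      ∃ φ : N →ₗ[R] F, φ n ≠ 0)
    {ℓ' ℓ : ℕ} (A : Matrix (Fin ℓ') (Fin ℓ) R) (r : Fin ℓ → R)
    (hr : ∀ f : Fin ℓ → F, (∀ i, ∑ j, A i j • f j = 0) → ∑ j, r j • f j = 0) :
    r ∈ Submodule.span R (Set.range fun i => fun j => A i j) :=
  row_mem_span_of_annihilates_solutions_general hcog A r hr
end

section
/- (Theorem 3.1, maximality part.) Let R be a commutative ring and F an R-module that is a cogenerator (for every R-module N and every nonzero n ∈ N there exists φ : N →ₗ[R] F with φ n ≠ 0). Let A be an ℓ'×ℓ matrix and B an ℓ×ℓ'' matrix over R such that the columns of B generate the right kernel of A: the kernel of the R-linear map R^ℓ → R^{ℓ'}, v ↦ Matrix.mulVec A v, equals the R-submodule of R^ℓ generated by the columns of B. Then for every m and every ℓ×m matrix C over R such that (fun i => ∑_j C i j • h j) ∈ sol_F(A) for all h : Fin m → F, the image { (fun i => ∑_j C i j • h j) | h : Fin m → F } is contained in the image { (fun i => ∑_j B i j • g j) | g : Fin ℓ'' → F }. -/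
universe u v

/-!
A cogenerator `F` is a faithful `R`-module, so a matrix `M` over `R` with `M.smulVec h = 0` for
all `h : κ → F` vanishes. Applied to `A * C` this puts every column of `C` in the right kernel of
`A`, that is, in the span of the columns of `B`; hence `C = B * D` for some `D`, and
`C.smulVec h = B.smulVec (D.smulVec h)` lies in the image of `B`.
-/

namespace Matrix

variable {R F ι κ μ : Type*} [CommRing R] [AddCommGroup F] [Module R F]
  [Fintype κ]

def smulVec (M : Matrix ι κ R) (h : κ → F) : ι → F := fun i => ∑ j, M i j • h j

theorem smulVec_mul [Fintype μ] (M : Matrix ι κ R) (N : Matrix κ μ R) (h : μ → F) :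
    (M * N).smulVec h = M.smulVec (N.smulVec h) := by
  funext i
  simp only [smulVec, mul_apply, Finset.sum_smul, Finset.smul_sum, smul_smul]
  exact Finset.sum_comm

theorem smulVec_single [DecidableEq κ] (M : Matrix ι κ R) (k : κ) (x : F) :
    M.smulVec (Pi.single k x) = fun i => M i k • x := by
  funext i
  simp [smulVec, Pi.single_apply]

theorem eq_zero_of_forall_smulVec_eq_zero [FaithfulSMul R F] {M : Matrix ι κ R}
    (hM : ∀ h : κ → F, M.smulVec h = 0) : M = 0 := by
  classical
  ext i k
  refine FaithfulSMul.eq_of_smul_eq_smul (α := F) fun x => ?_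
  simpa [smulVec_single] using congrFun (hM (Pi.single k x)) i

theorem exists_mul_eq_of_col_mem_range {B : Matrix ι κ R} {C : Matrix ι μ R}
    (hC : ∀ k, C.col k ∈ LinearMap.range B.mulVecLin) : ∃ D : Matrix κ μ R, B * D = C := by
  choose d hd using hC
  refine ⟨(of d)ᵀ, ?_⟩
  ext i k
  exact congrFun (hd k) i

end Matrix

theorem faithfulSMul_of_forall_ne_zero_exists_linearMap {R F : Type*} [CommRing R]
    [AddCommGroup F] [Module R F] (hF : ∀ r : R, r ≠ 0 → ∃ φ : R →ₗ[R] F, φ r ≠ 0) :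
    FaithfulSMul R F where
  eq_of_smul_eq_smul {r s} hrs := by
    by_contra hne
    obtain ⟨φ, hφ⟩ := hF (r - s) (sub_ne_zero.mpr hne)
    apply hφ
    rw [← mul_one (r - s), ← smul_eq_mul, map_smul, sub_smul, hrs, sub_self]

/-- Theorem 3.1, maximality part: over a cogenerator module `F`, if the columns of `B`
generate the right kernel of `A`, then the image of any operator matrix `C` whose image
lies in `sol_F(A)` is contained in the image of `B`. -/
theorem image_subset_of_right_kernel_cogenerator
    {R : Type u} [CommRing R] {F : Type v} [AddCommGroup F] [Module R F]
    (hcog : ∀ (N : Type u) [AddCommGroup N] [Module R N] (n : N), n ≠ 0 →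
      ∃ φ : N →ₗ[R] F, φ n ≠ 0)
    {ℓ' ℓ ℓ'' : ℕ} (A : Matrix (Fin ℓ') (Fin ℓ) R) (B : Matrix (Fin ℓ) (Fin ℓ'') R)
    (hker : LinearMap.ker A.mulVecLin =
      Submodule.span R (Set.range fun j => fun i => B i j)) :
    ∀ (m : ℕ) (C : Matrix (Fin ℓ) (Fin m) R),
      (∀ h : Fin m → F, (fun i => ∑ j, C i j • h j) ∈
        {f : Fin ℓ → F | ∀ i, ∑ j, A i j • f j = 0}) →
      {f : Fin ℓ → F | ∃ h : Fin m → F, f = fun i => ∑ j, C i j • h j} ⊆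
        {f : Fin ℓ → F | ∃ g : Fin ℓ'' → F, f = fun i => ∑ j, B i j • g j} := by
  intro m C hC _ ⟨h, hf⟩
  have : FaithfulSMul R F := faithfulSMul_of_forall_ne_zero_exists_linearMap (hcog R)
  have hAC : A * C = 0 := Matrix.eq_zero_of_forall_smulVec_eq_zero (F := F) fun h => by
    rw [Matrix.smulVec_mul]
    exact funext (hC h)
  have hker_eq_range : LinearMap.ker A.mulVecLin = LinearMap.range B.mulVecLin :=
    hker.trans B.range_mulVecLin.symm
  obtain ⟨D, rfl⟩ : ∃ D, B * D = C := Matrix.exists_mul_eq_of_col_mem_range fun k => by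
    rw [← hker_eq_range, LinearMap.mem_ker, Matrix.mulVecLin_apply]
    funext i
    simpa [Matrix.mul_apply, Matrix.mulVec, dotProduct] using congrFun (congrFun hAC i) k
  exact ⟨D.smulVec h, hf.trans (Matrix.smulVec_mul B D h)⟩
end

section
/- (Corollary 3.2, characterization.) Let R be a commutative ring and F an R-module that is injective (Module.Injective R F) and a cogenerator (for every R-module N and every nonzero n ∈ N there exists φ : N →ₗ[R] F with φ n ≠ 0). Let A be an ℓ'×ℓ matrix, B an ℓ×ℓ'' matrix, and A' an ℓ'''×ℓ matrix over R such that the columns of B generate the right kernel of A (the kernel of v ↦ Matrix.mulVec A v equals the column module of B) and the rows of A' generate the left kernel of B (the kernel of w ↦ Matrix.vecMul w B equals the row module of A'). Then sol_F(A) = { (fun i => ∑_j B i j • h j) | h : Fin ℓ'' → F } if and only if the R-submodule of R^ℓ generated by the rows of A equals the R-submodule generated by the rows of A'. -/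
/-!
Identify `f : Fin ℓ → F` with the linear form `v ↦ ∑ j, v j • f j` on `R^ℓ`. Then `f` solves `A`
exactly when this form vanishes on the row module of `A`, and `f` is parametrized by `B` exactly
when the form factors through `w ↦ w ᵥ* B`. Since `F` is injective, a form factors through a
linear map as soon as it vanishes on its kernel, which is the row module of `A'`; so `B`
parametrizes `sol_F(A')`. Since `F` is a cogenerator, a submodule of `R^ℓ` is the common kernel of
the forms vanishing on it, so `sol_F(A) = sol_F(A')` forces equal row modules.
-/

universe u v

open Submodule LinearMap

namespace Module

variable {R : Type u} [Ring R] {F : Type v} [AddCommGroup F] [Module R F]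

variable (R F) in
def IsCogenerator_s11 : Prop :=
  ∀ (N : Type u) [AddCommGroup N] [Module R N] (n : N), n ≠ 0 → ∃ φ : N →ₗ[R] F, φ n ≠ 0

-- A cogenerator is faithful, so `r ↦ (r • ·)` embeds `R` into `F → F`. Smallness is what lets
-- `Module.Injective R F`, which only speaks of modules in the universe of `F`, extend maps of
-- `R`-modules in other universes.
theorem IsCogenerator_s11.small (hF : IsCogenerator_s11 R F) : Small.{v} R := by
  refine small_of_injective (f := fun (r : R) (x : F) => r • x) fun r s hrs => ?_
  by_contra hne
  obtain ⟨φ, hφ⟩ := hF R (r - s) (sub_ne_zero.mpr hne)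
  apply hφ
  have hrs' : r • φ 1 = s • φ 1 := congrFun hrs (φ 1)
  rw [← mul_one (r - s), ← smul_eq_mul, map_smul, sub_smul, hrs', sub_self]

theorem IsCogenerator_s11.le_of_forall_le_ker (hF : IsCogenerator_s11 R F) {P : Type u}
    [AddCommGroup P] [Module R P] {U V : Submodule R P}
    (h : ∀ φ : P →ₗ[R] F, U ≤ ker φ → V ≤ ker φ) : V ≤ U := by
  intro v hv
  by_contra hvU
  obtain ⟨φ, hφ⟩ := hF (P ⧸ U) (U.mkQ v) (by simpa [Submodule.Quotient.mk_eq_zero] using hvU)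
  exact hφ (h (φ ∘ₗ U.mkQ) (fun u hu => by simp [(Quotient.mk_eq_zero U).mpr hu]) hv)

theorem Injective.exists_comp_eq_iff_ker_le [Small.{v} R] [Module.Injective R F]
    {P Q : Type*} [AddCommGroup P] [Module R P] [AddCommGroup Q] [Module R Q]
    (g : P →ₗ[R] Q) (φ : P →ₗ[R] F) : (∃ ψ : Q →ₗ[R] F, ψ ∘ₗ g = φ) ↔ ker g ≤ ker φ := by
  refine ⟨fun ⟨ψ, hψ⟩ => hψ ▸ ker_le_ker_comp g ψ, fun h => ?_⟩
  obtain ⟨ψ, hψ⟩ := Module.Injective.extension_property R F _ _ ((ker g).liftQ g le_rfl)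
    (ker_eq_bot.mp (ker_liftQ_eq_bot _ _ _ le_rfl)) ((ker g).liftQ φ h)
  exact ⟨ψ, LinearMap.ext fun x => by simpa using congr($hψ (Submodule.Quotient.mk x))⟩

end Module

theorem Fintype.linearCombination_map_single_one {R M ι : Type*} [CommSemiring R] [AddCommMonoid M]
    [Module R M] [Fintype ι] [DecidableEq ι] (φ : (ι → R) →ₗ[R] M) :
    Fintype.linearCombination R (fun i => φ (Pi.single i 1)) = φ := by
  ext i
  simp

namespace Matrix

variable {R : Type u} [CommRing R] {F : Type v} [AddCommGroup F] [Module R F]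

section

variable {m n o : Type*} [Fintype n] [Fintype o]

variable (F) in
def solutionSet (M : Matrix m n R) : Set (n → F) :=
  {f | ∀ i, ∑ j, M i j • f j = 0}

variable (F) in
def imageSet (B : Matrix n o R) : Set (n → F) :=
  {f | ∃ h : o → F, f = fun i => ∑ j, B i j • h j}

theorem mem_solutionSet_iff {M : Matrix m n R} {f : n → F} :
    f ∈ M.solutionSet F ↔ span R (Set.range M.row) ≤ ker (Fintype.linearCombination R f) := by
  rw [span_le, Set.range_subset_iff]
  simp only [SetLike.mem_coe, mem_ker, Fintype.linearCombination_apply]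
  rfl

theorem linearCombination_sum_smul (B : Matrix n o R) (h : o → F) :
    Fintype.linearCombination R (fun i => ∑ k, B i k • h k) =
      Fintype.linearCombination R h ∘ₗ B.vecMulLinear := by
  classical
  ext i
  simp [Fintype.linearCombination_apply]

theorem mem_imageSet_iff {B : Matrix n o R} {f : n → F} :
    f ∈ B.imageSet F ↔
      ∃ ψ : (o → R) →ₗ[R] F, ψ ∘ₗ B.vecMulLinear = Fintype.linearCombination R f := by
  classical
  constructor
  · rintro ⟨h, rfl⟩
    exact ⟨_, (linearCombination_sum_smul B h).symm⟩
  · rintro ⟨ψ, hψ⟩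
    refine ⟨fun k => ψ (Pi.single k 1), funext fun i => ?_⟩
    rw [← Fintype.linearCombination_map_single_one ψ, ← linearCombination_sum_smul] at hψ
    simpa using congr($hψ (Pi.single i 1)).symm

theorem solutionSet_eq_imageSet [Small.{v} R] [Module.Injective R F] {A' : Matrix m n R}
    {B : Matrix n o R} (hlker : ker B.vecMulLinear = span R (Set.range A'.row)) :
    A'.solutionSet F = B.imageSet F := by
  ext f
  rw [mem_solutionSet_iff, mem_imageSet_iff, Module.Injective.exists_comp_eq_iff_ker_le, hlker]

end

section

-- `n : Type` keeps `n → R` in the universe of `R`, where the cogenerator property applies.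
variable {l m : Type*} {n : Type} [Fintype n]

theorem span_range_le_of_solutionSet_subset (hF : Module.IsCogenerator_s11 R F)
    {M : Matrix l n R} {N : Matrix m n R} (h : M.solutionSet F ⊆ N.solutionSet F) :
    span R (Set.range N.row) ≤ span R (Set.range M.row) := by
  classical
  refine hF.le_of_forall_le_ker fun φ hφ => ?_
  rw [← Fintype.linearCombination_map_single_one φ] at hφ ⊢
  exact mem_solutionSet_iff.mp (h (mem_solutionSet_iff.mpr hφ))

theorem solutionSet_eq_iff_span_range_eq (hF : Module.IsCogenerator_s11 R F)
    {M : Matrix l n R} {N : Matrix m n R} :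
    M.solutionSet F = N.solutionSet F ↔ span R (Set.range M.row) = span R (Set.range N.row) := by
  refine ⟨fun h => le_antisymm ?_ ?_, fun h => ?_⟩
  · exact span_range_le_of_solutionSet_subset hF h.ge
  · exact span_range_le_of_solutionSet_subset hF h.le
  · ext f
    rw [mem_solutionSet_iff, mem_solutionSet_iff, h]

end

end Matrix

theorem parametrizable_iff_row_modules_eq_general
    {R : Type u} [CommRing R] {F : Type v} [AddCommGroup F] [Module R F]
    (hinj : Module.Injective R F)
    (hcog : ∀ (N : Type u) [AddCommGroup N] [Module R N] (n : N), n ≠ 0 →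
      ∃ φ : N →ₗ[R] F, φ n ≠ 0)
    {ℓ' ℓ ℓ'' ℓ''' : ℕ}
    (A : Matrix (Fin ℓ') (Fin ℓ) R) (B : Matrix (Fin ℓ) (Fin ℓ'') R)
    (A' : Matrix (Fin ℓ''') (Fin ℓ) R)
    (hlker : LinearMap.ker B.vecMulLinear =
      Submodule.span R (Set.range fun i => fun j => A' i j)) :
    ({f : Fin ℓ → F | ∀ i, ∑ j, A i j • f j = 0} =
        {f : Fin ℓ → F | ∃ h : Fin ℓ'' → F, f = fun i => ∑ j, B i j • h j}) ↔
      Submodule.span R (Set.range fun i => fun j => A i j) =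
        Submodule.span R (Set.range fun i => fun j => A' i j) := by
  have : Small.{v} R := Module.IsCogenerator_s11.small hcog
  change A.solutionSet F = B.imageSet F ↔ _
  rw [← Matrix.solutionSet_eq_imageSet hlker]
  exact Matrix.solutionSet_eq_iff_span_range_eq hcog

/-- Corollary 3.2, characterization: over an injective cogenerator module `F`, with
`B = rker(A)` and `A' = lker(B)`, the matrix `B` parametrizes `sol_F(A)` if and only if
the row modules of `A` and `A'` coincide. -/
theorem parametrizable_iff_row_modules_eq
    {R : Type u} [CommRing R] {F : Type v} [AddCommGroup F] [Module R F]
    (hinj : Module.Injective R F)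
    (hcog : ∀ (N : Type u) [AddCommGroup N] [Module R N] (n : N), n ≠ 0 →
      ∃ φ : N →ₗ[R] F, φ n ≠ 0)
    {ℓ' ℓ ℓ'' ℓ''' : ℕ}
    (A : Matrix (Fin ℓ') (Fin ℓ) R) (B : Matrix (Fin ℓ) (Fin ℓ'') R)
    (A' : Matrix (Fin ℓ''') (Fin ℓ) R)
    (hrker : LinearMap.ker A.mulVecLin =
      Submodule.span R (Set.range fun j => fun i => B i j))
    (hlker : LinearMap.ker B.vecMulLinear =
      Submodule.span R (Set.range fun i => fun j => A' i j)) :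
    ({f : Fin ℓ → F | ∀ i, ∑ j, A i j • f j = 0} =
        {f : Fin ℓ → F | ∃ h : Fin ℓ'' → F, f = fun i => ∑ j, B i j • h j}) ↔
      Submodule.span R (Set.range fun i => fun j => A i j) =
        Submodule.span R (Set.range fun i => fun j => A' i j) :=
  parametrizable_iff_row_modules_eq_general hinj hcog A B A' hlker
end

section
/- (Example 4.3, left kernel.) Let R = MvPolynomial (Fin 3) ℚ with variables x₁ = X 0, x₂ = X 1, x₃ = X 2, and let B be the 3×3 matrix over R with rows (0, x₃, −x₂), (−x₃, 0, x₁), (x₂, −x₁, 0). The kernel of the R-linear map R³ → R³, w ↦ Matrix.vecMul w B, equals the R-submodule of R³ generated by the single vector (x₁, x₂, x₃). -/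
/-!
The map `w ↦ w B` is the cross product `x ⨯₃ w` with `x = (x₁, x₂, x₃)`, so its kernel contains
`x`. Conversely, `x ⨯₃ w = 0` gives `x₁ w₃ = x₃ w₁` and `x₁ w₂ = x₂ w₁`; since `x₁` is prime and
does not divide `x₃`, it divides `w₁ = t x₁`, and cancelling `x₁` yields `w = t x`.
-/

open MvPolynomial Matrix

section CrossProduct

variable {R : Type*} [CommRing R]

theorem vecMul_skew_eq_cross (a w : Fin 3 → R) :
    w ᵥ* !![0, a 2, -a 1; -a 2, 0, a 0; a 1, -a 0, 0] = a ⨯₃ w := by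
  ext j
  fin_cases j <;> simp [vecMul, dotProduct, Fin.sum_univ_three, cross_apply] <;> ring

theorem mem_span_singleton_of_cross_eq_zero [IsDomain R] {v w : Fin 3 → R}
    (hv : Prime (v 0)) (hv₂ : ¬ v 0 ∣ v 2) (hw : v ⨯₃ w = 0) : w ∈ R ∙ v := by
  have e₁ : v 2 * w 0 = v 0 * w 2 := sub_eq_zero.mp (by simpa [cross_apply] using congrFun hw 1)
  have e₂ : v 0 * w 1 = v 1 * w 0 := sub_eq_zero.mp (by simpa [cross_apply] using congrFun hw 2)
  obtain ⟨t, ht⟩ : v 0 ∣ w 0 := (hv.dvd_or_dvd ⟨w 2, e₁⟩).resolve_left hv₂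
  have h₁ : w 1 = t * v 1 := mul_left_cancel₀ hv.ne_zero (by linear_combination e₂ + v 1 * ht)
  have h₂ : w 2 = t * v 2 := mul_left_cancel₀ hv.ne_zero (by linear_combination -e₁ + v 2 * ht)
  refine Submodule.mem_span_singleton.mpr ⟨t, ?_⟩
  ext j
  fin_cases j <;> simp [ht, h₁, h₂, mul_comm]

theorem ker_cross_eq_span_singleton [IsDomain R] {v : Fin 3 → R}
    (hv : Prime (v 0)) (hv₂ : ¬ v 0 ∣ v 2) : LinearMap.ker (crossProduct v) = R ∙ v := by
  refine le_antisymm (fun w hw ↦ mem_span_singleton_of_cross_eq_zero hv hv₂ hw) ?_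
  rw [Submodule.span_singleton_le_iff_mem, LinearMap.mem_ker, cross_self]

end CrossProduct

/-- Example 4.3, left kernel: over `R = ℚ[x₁,x₂,x₃]`, the left kernel of the curl matrix
`B` (rows `(0, x₃, −x₂)`, `(−x₃, 0, x₁)`, `(x₂, −x₁, 0)`) is generated by the single row
vector `(x₁, x₂, x₃)`. -/
theorem curl_left_kernel
    (B : Matrix (Fin 3) (Fin 3) (MvPolynomial (Fin 3) ℚ))
    (hB : B = !![0, X 2, -(X 1); -(X 2), 0, X 0; X 1, -(X 0), 0]) :
    LinearMap.ker B.vecMulLinear =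
      Submodule.span (MvPolynomial (Fin 3) ℚ) {![X 0, X 1, X 2]} := by
  have hcross : B.vecMulLinear = crossProduct ![X 0, X 1, X 2] := by
    refine LinearMap.ext fun w ↦ ?_
    simpa [hB] using vecMul_skew_eq_cross ![X 0, X 1, X 2] w
  rw [hcross]
  exact ker_cross_eq_span_singleton X_prime (by simp)
end

section
/- (Example 4.1, Maxwell right kernel.) Let R = MvPolynomial (Fin 4) ℝ with variables dx = X 0, dy = X 1, dz = X 2, dt = X 3. Let A be the 8×10 matrix over R with rows: r₁ = (0, −dz, dy, dt, 0, 0, 0, 0, 0, 0); r₂ = (dz, 0, −dx, 0, dt, 0, 0, 0, 0, 0); r₃ = (−dy, dx, 0, 0, 0, dt, 0, 0, 0, 0); r₄ = (0, 0, 0, dx, dy, dz, 0, 0, 0, 0); r₅ = (−dt, 0, 0, 0, −dz, dy, −1, 0, 0, 0); r₆ = (0, −dt, 0, dz, 0, −dx, 0, −1, 0, 0); r₇ = (0, 0, −dt, −dy, dx, 0, 0, 0, −1, 0); r₈ = (dx, dy, dz, 0, 0, 0, 0, 0, 0, −1). Let B be the 10×4 matrix over R with rows: (dx, dt, 0, 0);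 (dy, 0, dt, 0); (dz, 0, 0, dt); (0, 0, dz, −dy); (0, −dz, 0, dx); (0, dy, −dx, 0); (−dt·dx, dy²+dz²−dt², −dy·dx, −dz·dx); (−dt·dy, −dy·dx, dx²+dz²−dt², −dz·dy); (−dt·dz, −dz·dx, −dz·dy, dx²+dy²−dt²); (dx²+dy²+dz², dt·dx, dt·dy, dt·dz). Then the kernel of the R-linear map R¹⁰ → R⁸, v ↦ Matrix.mulVec A v, equals the R-submodule of R¹⁰ generated by the four columns of B; in particular A * B = 0. -/
open MvPolynomial Matrix

noncomputable section

/-- The operator symbol `∂ₓ`. -/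
def dx : MvPolynomial (Fin 4) ℝ := X 0
/-- The operator symbol `∂_y`. -/
def dy : MvPolynomial (Fin 4) ℝ := X 1
/-- The operator symbol `∂_z`. -/
def dz : MvPolynomial (Fin 4) ℝ := X 2
/-- The operator symbol `∂_t`. -/
def dt : MvPolynomial (Fin 4) ℝ := X 3

/-- The operator matrix of the inhomogeneous Maxwell equations (all constants set to 1). -/
def maxwellA : Matrix (Fin 8) (Fin 10) (MvPolynomial (Fin 4) ℝ) :=
  !![0, -dz, dy, dt, 0, 0, 0, 0, 0, 0;
     dz, 0, -dx, 0, dt, 0, 0, 0, 0, 0;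
     -dy, dx, 0, 0, 0, dt, 0, 0, 0, 0;
     0, 0, 0, dx, dy, dz, 0, 0, 0, 0;
     -dt, 0, 0, 0, -dz, dy, -1, 0, 0, 0;
     0, -dt, 0, dz, 0, -dx, 0, -1, 0, 0;
     0, 0, -dt, -dy, dx, 0, 0, 0, -1, 0;
     dx, dy, dz, 0, 0, 0, 0, 0, 0, -1]

/-- The parametrization of Maxwell's equations by the electric and magnetic potentials. -/
def maxwellB : Matrix (Fin 10) (Fin 4) (MvPolynomial (Fin 4) ℝ) :=
  !![dx, dt, 0, 0;
     dy, 0, dt, 0;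
     dz, 0, 0, dt;
     0, 0, dz, -dy;
     0, -dz, 0, dx;
     0, dy, -dx, 0;
     -(dt*dx), dy^2+dz^2-dt^2, -(dy*dx), -(dz*dx);
     -(dt*dy), -(dy*dx), dx^2+dz^2-dt^2, -(dz*dy);
     -(dt*dz), -(dz*dx), -(dz*dy), dx^2+dy^2-dt^2;
     dx^2+dy^2+dz^2, dt*dx, dt*dy, dt*dz]

/-!
The rows of `A` say that `curl E = -∂ₜB` and `div B = 0`, and express `J` and `ρ` through `E`
and `B`. Over a polynomial ring the Koszul complex of `∂ₓ, ∂_y, ∂_z` is exact: a divergence-free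
`B` is a curl, `B = curl a`, and then `curl (E + ∂ₜa) = 0` makes `E + ∂ₜa = grad φ`. The
potentials `(φ, -a)` are the coefficients of `(E, B, J, ρ)` with respect to the columns of `B`.
-/

namespace MvPolynomial

variable {R σ : Type*} [CommRing R]

lemma X_dvd_sub_aeval_update_X_zero [DecidableEq σ] (i : σ) (f : MvPolynomial σ R) :
    X i ∣ f - aeval (Function.update X i 0) f := by
  induction f using MvPolynomial.induction_on with
  | C a => simp
  | add p q hp hq => simpa only [map_add, add_sub_add_comm] using dvd_add hp hq
  | mul_X p j hp =>
    rw [map_mul, aeval_X]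
    by_cases hj : j = i
    · subst hj
      simpa only [Function.update_self, mul_zero, sub_zero] using dvd_mul_left (X j) p
    · simpa only [Function.update_of_ne hj, ← sub_mul] using dvd_mul_of_dvd_left hp (X j)

variable [IsDomain R] {i j k : σ}

lemma exists_eq_X_mul_of_X_mul_eq_X_mul (hij : i ≠ j) {a b : MvPolynomial σ R}
    (h : X i * a = X j * b) : ∃ c, a = X j * c ∧ b = X i * c := by
  have hb : X i ∣ b :=
    (X_prime.dvd_or_dvd (h ▸ dvd_mul_right (X i) a)).resolve_left (X_dvd_X.not.mpr hij)
  obtain ⟨c, rfl⟩ := hb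
  refine ⟨c, ?_, rfl⟩
  rwa [mul_left_comm, X_mul_cancel_left_iff] at h

lemma exists_gradient_of_curl_eq_zero (hij : i ≠ j) {p q s : MvPolynomial σ R}
    (h₁ : X i * q = X j * p) (h₂ : X k * p = X i * s) :
    ∃ c, p = X i * c ∧ q = X j * c ∧ s = X k * c := by
  obtain ⟨c, rfl, rfl⟩ := exists_eq_X_mul_of_X_mul_eq_X_mul hij h₁
  refine ⟨c, rfl, rfl, ?_⟩
  rw [mul_left_comm, X_mul_cancel_left_iff] at h₂
  exact h₂.symm

lemma exists_curl_of_divergence_eq_zero (hij : i ≠ j) (hik : i ≠ k) (hjk : j ≠ k)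
    {p q s : MvPolynomial σ R} (h : X i * p + X j * q + X k * s = 0) :
    ∃ a b c, p = X j * c - X k * b ∧ q = X k * a - X i * c ∧ s = X i * b - X j * a := by
  classical
  set φ := aeval (R := R) (Function.update (X (R := R)) i 0)
  -- Setting `X i = 0` leaves a divergence-free field in the two variables `X j`, `X k`.
  have hφ : X j * φ q = X k * -φ s := by
    have := congrArg φ h
    simp only [φ, map_add, map_mul, aeval_X, map_zero, Function.update_self,
      Function.update_of_ne hij.symm, Function.update_of_ne hik.symm] at this
    linear_combination this
  obtain ⟨a, hqa, hsa⟩ := exists_eq_X_mul_of_X_mul_eq_X_mul hjk hφ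
  obtain ⟨q', hq'⟩ := X_dvd_sub_aeval_update_X_zero i q
  obtain ⟨s', hs'⟩ := X_dvd_sub_aeval_update_X_zero i s
  have hp : p = -(X j * q') - X k * s' := by
    rw [← X_mul_cancel_left_iff (i := i)]
    linear_combination h - X j * hq' - X k * hs' - X j * hqa + X k * hsa
  exact ⟨a, s', -q', by rw [hp]; ring, by linear_combination hq' + hqa,
    by linear_combination hs' - hsa⟩

end MvPolynomial

lemma maxwellA_mul_maxwellB : maxwellA * maxwellB = 0 := by
  ext i j : 1
  fin_cases i <;> fin_cases j <;>
    simp [maxwellA, maxwellB, mul_apply, Fin.sum_univ_succ, dx, dy, dz, dt] <;> ring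

lemma exists_maxwellB_mulVec_eq_of_maxwellA_mulVec_eq_zero {v : Fin 10 → MvPolynomial (Fin 4) ℝ}
    (hv : maxwellA *ᵥ v = 0) : ∃ c, maxwellB *ᵥ c = v := by
  obtain ⟨curlE₁, curlE₂, curlE₃, divB, hJ₁, hJ₂, hJ₃, hρ⟩ : _ ∧ _ ∧ _ ∧ _ ∧ _ ∧ _ ∧ _ ∧ _ := by
    simpa [funext_iff, Fin.forall_fin_succ, maxwellA, mulVec, dotProduct, Fin.sum_univ_succ,
      dx, dy, dz, dt] using hv
  obtain ⟨a₁, a₂, a₃, hB₁, hB₂, hB₃⟩ := exists_curl_of_divergence_eq_zero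
    (p := v 3) (q := v 4) (s := v 5) (by decide : (0 : Fin 4) ≠ 1) (by decide : (0 : Fin 4) ≠ 2)
    (by decide : (1 : Fin 4) ≠ 2) (by linear_combination divB)
  obtain ⟨φ, hE₁, hE₂, hE₃⟩ := exists_gradient_of_curl_eq_zero (k := 2)
    (p := v 0 + X 3 * a₁) (q := v 1 + X 3 * a₂) (s := v 2 + X 3 * a₃) (by decide : (0 : Fin 4) ≠ 1)
    (by linear_combination curlE₃ - X 3 * hB₃) (by linear_combination curlE₂ - X 3 * hB₂)
  refine ⟨![φ, -a₁, -a₂, -a₃], funext fun i => ?_⟩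
  fin_cases i <;> simp [maxwellB, mulVec, dotProduct, Fin.sum_univ_succ, dx, dy, dz, dt]
  · linear_combination -hE₁
  · linear_combination -hE₂
  · linear_combination -hE₃
  · linear_combination -hB₁
  · linear_combination -hB₂
  · linear_combination -hB₃
  · linear_combination hJ₁ + X 3 * hE₁ + X 2 * hB₂ - X 1 * hB₃
  · linear_combination hJ₂ + X 3 * hE₂ - X 2 * hB₁ + X 0 * hB₃
  · linear_combination hJ₃ + X 3 * hE₃ + X 1 * hB₁ - X 0 * hB₂
  · linear_combination hρ - X 0 * hE₁ - X 1 * hE₂ - X 2 * hE₃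

lemma ker_maxwellA_mulVecLin :
    LinearMap.ker maxwellA.mulVecLin = LinearMap.range maxwellB.mulVecLin := by
  refine le_antisymm (fun _ hv => exists_maxwellB_mulVec_eq_of_maxwellA_mulVec_eq_zero hv) ?_
  rw [LinearMap.range_le_ker_iff, ← mulVecLin_mul, maxwellA_mul_maxwellB, mulVecLin_zero]

/-- Example 4.1, Maxwell right kernel: the right kernel of the Maxwell operator matrix `A`
is generated by the four columns of the potential matrix `B`; in particular `A * B = 0`. -/
theorem maxwell_right_kernel :
    LinearMap.ker maxwellA.mulVecLin =
      Submodule.span (MvPolynomial (Fin 4) ℝ)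
        (Set.range fun j : Fin 4 => fun i : Fin 10 => maxwellB i j) ∧
    maxwellA * maxwellB = 0 :=
  ⟨by rw [ker_maxwellA_mulVecLin, range_mulVecLin]; rfl, maxwellA_mul_maxwellB⟩

end
end
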